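/- For every positive integer n, the energy complexity of the address function satisfies EC(ADDR_n) ≤ 3n. -/

import Mathlib

/-- A gate in a Boolean circuit over the standard basis `{∨₂, ∧₂, ¬}`:
input gates labelled by variables, constant gates, and `∧`/`∨`/`¬` gates
whose arguments are (indices of) earlier gates. -/
inductive Gate (n : ℕ) : Type where
  | input : Fin n → Gate n
  | const : Bool → Gate n
  | and : ℕ → ℕ → Gate n
  | or : ℕ → ℕ → Gate n
  | not : ℕ → Gate n
deriving DecidableEq

/-- The indices of the incoming gates of a gate. -/
def Gate.deps {n : ℕ} : Gate n → List ℕ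
  | .and a b => [a, b]
  | .or a b => [a, b]
  | .not a => [a]
  | _ => []

/-- Inner gates are the non-input (and non-constant) gates, i.e. `∧`, `∨`, `¬` gates. -/
def Gate.isInner {n : ℕ} : Gate n → Bool
  | .and _ _ => true
  | .or _ _ => true
  | .not _ => true
  | _ => false

/-- A Boolean circuit over the standard basis on `n` input variables: a sequence of
gates (topologically sorted, so each gate only takes earlier gates as inputs,
which makes the underlying graph acyclic) together with a designated output gate. -/
structure Circuit (n : ℕ) : Type where
  size : ℕ
  gates : Fin size → Gate n
  out : Fin size
  wf : ∀ i : Fin size, ∀ j ∈ (gates i).deps, j < (i : ℕ)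

/-- The Boolean value of gate `i` of circuit `C` under input `x`. -/
def Circuit.evalGate {n : ℕ} (C : Circuit n) (x : Fin n → Bool) (i : ℕ) (h : i < C.size) :
    Bool :=
  match hg : C.gates ⟨i, h⟩ with
  | .input j => x j
  | .const b => b
  | .not a =>
      have ha : a < i := C.wf ⟨i, h⟩ a (by rw [hg]; simp [Gate.deps])
      ! C.evalGate x a (ha.trans h)
  | .and a b =>
      have ha : a < i := C.wf ⟨i, h⟩ a (by rw [hg]; simp [Gate.deps])
      have hb : b < i := C.wf ⟨i, h⟩ b (by rw [hg]; simp [Gate.deps])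
      C.evalGate x a (ha.trans h) && C.evalGate x b (hb.trans h)
  | .or a b =>
      have ha : a < i := C.wf ⟨i, h⟩ a (by rw [hg]; simp [Gate.deps])
      have hb : b < i := C.wf ⟨i, h⟩ b (by rw [hg]; simp [Gate.deps])
      C.evalGate x a (ha.trans h) || C.evalGate x b (hb.trans h)
termination_by i

/-- The output of circuit `C` on input `x`. -/
def Circuit.output {n : ℕ} (C : Circuit n) (x : Fin n → Bool) : Bool :=
  C.evalGate x C.out C.out.isLt

/-- `C` computes the Boolean function `f`. -/
def Circuit.Computes {n : ℕ} (C : Circuit n) (f : (Fin n → Bool) → Bool) : Prop :=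
  ∀ x, C.output x = f x

/-- The number of activated inner gates of `C` under input `x`. -/
def Circuit.energyAt {n : ℕ} (C : Circuit n) (x : Fin n → Bool) : ℕ :=
  (Finset.univ.filter fun i : Fin C.size =>
    (C.gates i).isInner = true ∧ C.evalGate x i i.isLt = true).card

/-- The energy complexity `EC(C)` of a circuit `C`: the maximum number of
activated inner gates over all inputs. -/
def Circuit.energy {n : ℕ} (C : Circuit n) : ℕ :=
  Finset.univ.sup fun x : Fin n → Bool => C.energyAt x

/-- The energy complexity `EC(f)` of a Boolean function `f`: the minimum of `EC(C)`
over all circuits `C` computing `f`. -/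
noncomputable def EC {n : ℕ} (f : (Fin n → Bool) → Bool) : ℕ :=
  sInf {k | ∃ C : Circuit n, C.Computes f ∧ C.energy = k}

/-- The number with binary representation `x 0, x 1, …, x (n-1)` (most significant
bit first); it is less than `2^n` (so taking `% 2^n` below does not change it). -/
def binVal {n : ℕ} (x : Fin n → Bool) : ℕ :=
  ∑ i : Fin n, if x i = true then 2 ^ (n - 1 - (i : ℕ)) else 0

/-- The address function `ADDR_n : {0,1}^{n+2^n} → {0,1}`, returning the `y`-bit
indexed by the number whose binary representation is `x_1 x_2 ⋯ x_n`. -/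
def ADDR (n : ℕ) : (Fin (n + 2 ^ n) → Bool) → Bool := fun z =>
  z (Fin.natAdd n ⟨binVal (fun i : Fin n => z (Fin.castAdd (2 ^ n) i)) % 2 ^ n,
      Nat.mod_lt _ (by positivity)⟩)

-- helper eval lemmas
theorem Circuit.evalGate_input {n : ℕ} (C : Circuit n) (x : Fin n → Bool) {i : ℕ} {h : i < C.size}
    {j : Fin n} (hg : C.gates ⟨i, h⟩ = .input j) : C.evalGate x i h = x j := by
  rw [Circuit.evalGate]; split <;> simp_all

theorem Circuit.evalGate_not {n : ℕ} (C : Circuit n) (x : Fin n → Bool) {i : ℕ} {h : i < C.size}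
    {a : ℕ} (hg : C.gates ⟨i, h⟩ = .not a) (ha : a < i) :
    C.evalGate x i h = ! C.evalGate x a (ha.trans h) := by
  rw [Circuit.evalGate]; split <;> simp_all

theorem Circuit.evalGate_and {n : ℕ} (C : Circuit n) (x : Fin n → Bool) {i : ℕ} {h : i < C.size}
    {a b : ℕ} (hg : C.gates ⟨i, h⟩ = .and a b) (ha : a < i) (hb : b < i) :
    C.evalGate x i h = (C.evalGate x a (ha.trans h) && C.evalGate x b (hb.trans h)) := by
  rw [Circuit.evalGate]; split <;> simp_all

theorem Circuit.evalGate_or {n : ℕ} (C : Circuit n) (x : Fin n → Bool) {i : ℕ} {h : i < C.size}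
    {a b : ℕ} (hg : C.gates ⟨i, h⟩ = .or a b) (ha : a < i) (hb : b < i) :
    C.evalGate x i h = (C.evalGate x a (ha.trans h) || C.evalGate x b (hb.trans h)) := by
  rw [Circuit.evalGate]; split <;> simp_all

-- binVal lemmas
theorem binVal_succ {n : ℕ} (x : Fin (n+1) → Bool) :
    binVal x = (if x 0 then 2 ^ n else 0) + binVal (fun i : Fin n => x i.succ) := by
  rw [binVal, Fin.sum_univ_succ, binVal]
  simp only [Fin.val_zero, Fin.val_succ]
  congr 1
  apply Finset.sum_congr rfl
  intro i _
  have : n + 1 - 1 - ((i : ℕ) + 1) = n - 1 - (i : ℕ) := by omega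
  rw [this]

theorem binVal_lt {n : ℕ} (x : Fin n → Bool) : binVal x < 2 ^ n := by
  induction n with
  | zero => simp [binVal]
  | succ m ih =>
    rw [binVal_succ]
    have := ih (fun i : Fin m => x i.succ)
    have h2 : (2:ℕ)^(m+1) = 2^m + 2^m := by ring
    split <;> omega

theorem binVal_testBit {n : ℕ} (x : Fin n → Bool) (j : ℕ) (hj : j < n) :
    (binVal x).testBit j = x ⟨n - 1 - j, by omega⟩ := by
  induction n with
  | zero => omega
  | succ m ih =>
    rw [binVal_succ]
    have hlt := binVal_lt (fun i : Fin m => x i.succ)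
    rcases Nat.lt_or_ge j m with hjm | hjm
    · have htail := ih (fun i : Fin m => x i.succ) hjm
      have hidx : (⟨m + 1 - 1 - j, by omega⟩ : Fin (m+1)) = Fin.succ ⟨m - 1 - j, by omega⟩ := by
        ext; simp [Fin.succ]; omega
      rw [hidx]
      rcases hx : x 0 with h0 | h0
      · simp only [hx, Bool.false_eq_true, if_false, Nat.zero_add]; exact htail
      · simp only [hx, if_true]
        rw [Nat.testBit_two_pow_add_gt hjm]; exact htail
    · have hj' : j = m := by omega
      subst hj'
      have hfalse := Nat.testBit_lt_two_pow hlt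
      have hidx : (⟨j + 1 - 1 - j, by omega⟩ : Fin (j+1)) = 0 := by ext; simp
      rw [hidx]
      rcases hx : x 0 with h0 | h0
      · simp only [hx, Bool.false_eq_true, if_false, Nat.zero_add]; exact hfalse
      · simp only [hx, if_true]
        rw [Nat.testBit_two_pow_add_eq, hfalse]; rfl

/-! ### The low-energy circuit for ADDR -/

def indIdx (n w : ℕ) : ℕ :=
  if w = 2 then n + 2^n else if w = 3 then 0 else n + 2^n + n + (w - 4)

def termBase (n : ℕ) : ℕ := n + 2^n + n + (2^(n+1) - 4)
def orBase (n : ℕ) : ℕ := termBase n + 2^n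
def csize (n : ℕ) : ℕ := orBase n + (2^n - 1)

def leafIdx (n c : ℕ) : ℕ :=
  if c < 2^n then orBase n + (2^n - 1 - c) else termBase n + (c - 2^n)

def gateAt (n i : ℕ) : Gate (n + 2^n) :=
  if h : i < n + 2^n then .input ⟨i, h⟩
  else if i < n + 2^n + n then .not (i - (n + 2^n))
  else if i < termBase n then
    .and (indIdx n ((i - (n + 2^n + n) + 4) / 2))
      (if (i - (n + 2^n + n) + 4) % 2 = 1 then Nat.log2 ((i - (n + 2^n + n) + 4) / 2)
       else n + 2^n + Nat.log2 ((i - (n + 2^n + n) + 4) / 2))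
  else if i < orBase n then
    .and (indIdx n (2^n + (i - termBase n))) (n + (i - termBase n))
  else
    .or (leafIdx n (2 * (2^n - 1 - (i - orBase n))))
        (leafIdx n (2 * (2^n - 1 - (i - orBase n)) + 1))

theorem two_pow_pos' (n : ℕ) : 0 < 2^n := Nat.pow_pos (by norm_num)

theorem log2_le_of_lt {w k : ℕ} (h : w < 2^(k+1)) (hw : w ≠ 0) : Nat.log2 w ≤ k := by
  have := (Nat.log2_lt hw).2 h
  omega

theorem le_log2_of_le {w k : ℕ} (h : 2^k ≤ w) : k ≤ Nat.log2 w := by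
  have hw : w ≠ 0 := by have := two_pow_pos' k; omega
  exact (Nat.le_log2 hw).2 h

def addrC (n : ℕ) (hn : 0 < n) : Circuit (n + 2^n) where
  size := csize n
  gates i := gateAt n i
  out := ⟨csize n - 1, by
    have := two_pow_pos' n
    simp only [csize, orBase, termBase]; omega⟩
  wf := by
    rintro ⟨i, hi⟩ j hj
    simp only at hj ⊢
    have hP : 0 < 2^n := two_pow_pos' n
    have hP2 : (2:ℕ)^(n+1) = 2^n + 2^n := by ring
    have hn1 : (1:ℕ) ≤ n := hn
    have hP3 : 2 ≤ 2^n := by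
      calc 2 = 2^1 := by norm_num
      _ ≤ 2^n := Nat.pow_le_pow_right (by norm_num) hn
    rw [gateAt] at hj
    by_cases h1 : i < n + 2^n
    · simp [dif_pos h1, Gate.deps] at hj
    rw [dif_neg h1] at hj
    by_cases h2 : i < n + 2^n + n
    · rw [if_pos h2] at hj
      simp [Gate.deps] at hj
      omega
    rw [if_neg h2] at hj
    by_cases h3 : i < termBase n
    · rw [if_pos h3] at hj
      set u := i - (n + 2^n + n) + 4 with hu
      have hu4 : 4 ≤ u := by omega
      have huU : u < 2^(n+1) := by simp only [termBase] at h3; omega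
      have hd2 : 2 ≤ Nat.log2 (u/2) + 1 := by
        have h' : 2^1 ≤ u / 2 := by omega
        have := le_log2_of_le h'
        omega
      have hdn : Nat.log2 (u/2) + 1 ≤ n := by
        have h2' : u / 2 < 2^n := by omega
        have hu2 : u / 2 ≠ 0 := by omega
        have := (Nat.log2_lt hu2).2 h2'
        omega
      simp only [Gate.deps, List.mem_cons, List.not_mem_nil, or_false] at hj
      rcases hj with hj | hj
      · subst hj
        rw [indIdx]
        simp only [termBase] at h3 ⊢
        split
        · omega
        split
        · omega
        · have : u / 2 ≥ 4 := by rename_i hw2 hw3; omega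
          omega
      · split at hj <;> (subst hj; simp only [termBase] at h3 ⊢; omega)
    rw [if_neg h3] at hj
    by_cases h4 : i < orBase n
    · rw [if_pos h4] at hj
      have haB : i - termBase n < 2^n := by simp only [orBase] at h4; omega
      simp only [Gate.deps, List.mem_cons, List.not_mem_nil, or_false] at hj
      rcases hj with hj | hj <;> subst hj
      · simp only [termBase, orBase] at *
        rw [indIdx]
        split_ifs <;> omega
      · simp only [termBase, orBase] at *
        omega
    rw [if_neg h4] at hj
    have hiS : i < csize n := hi
    have hv1 : 1 ≤ 2^n - 1 - (i - orBase n) := by simp only [csize] at hiS; omega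
    simp only [Gate.deps, List.mem_cons, List.not_mem_nil, or_false] at hj
    have key : ∀ c, 2^n - 1 - (i - orBase n) < c → c < 2^(n+1) → leafIdx n c < i := by
      intro c hc1 hc2
      rw [leafIdx]
      split
      · simp only [csize] at hiS
        simp only [orBase] at *
        omega
      · simp only [orBase] at *
        omega
    rcases hj with hj | hj <;> subst hj
    · exact key _ (by omega) (by omega)
    · exact key _ (by omega) (by omega)

/-! ### Specification of gate values -/

theorem log2_eq {w k : ℕ} (h1 : 2^k ≤ w) (h2 : w < 2^(k+1)) : Nat.log2 w = k := by
  have hA := le_log2_of_le h1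
  have hw : w ≠ 0 := by have := two_pow_pos' k; omega
  have hB := (Nat.log2_lt hw).2 h2
  omega

theorem log2_step {u : ℕ} (h : 2 ≤ u) : Nat.log2 u = Nat.log2 (u / 2) + 1 := by
  rw [Nat.log2_def]
  simp [h]

def addrVal (n : ℕ) (x : Fin (n + 2^n) → Bool) : ℕ :=
  binVal (fun j : Fin n => x (Fin.castAdd (2^n) j))

def yVal (n : ℕ) (x : Fin (n + 2^n) → Bool) : Bool :=
  x (Fin.natAdd n ⟨addrVal n x % 2^n, Nat.mod_lt _ (two_pow_pos' n)⟩)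

def specAt (n : ℕ) (x : Fin (n + 2^n) → Bool) (i : ℕ) : Bool :=
  if h : i < n + 2^n then x ⟨i, h⟩
  else if h2 : i < n + 2^n + n then !x ⟨i - (n + 2^n), by have := Nat.two_pow_pos n; omega⟩
  else if i < termBase n then
    decide ((2^n + addrVal n x) / 2 ^ (n - Nat.log2 (i - (n + 2^n + n) + 4))
      = i - (n + 2^n + n) + 4)
  else if h4 : i < orBase n then
    decide (2^n + addrVal n x = 2^n + (i - termBase n)) &&
      x ⟨n + (i - termBase n), by simp only [orBase, termBase] at h4 ⊢; omega⟩
  else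
    yVal n x && decide ((2^n + addrVal n x) / 2 ^ (n - Nat.log2 (2^n - 1 - (i - orBase n)))
      = 2^n - 1 - (i - orBase n))

theorem spec_input {n : ℕ} (x : Fin (n + 2^n) → Bool) {j : ℕ} (hj : j < n + 2^n) :
    specAt n x j = x ⟨j, hj⟩ := by
  rw [specAt, dif_pos hj]

theorem spec_bit {n : ℕ} (x : Fin (n + 2^n) → Bool) {j : ℕ} (hj : j < n) :
    specAt n x j = (addrVal n x).testBit (n - 1 - j) := by
  have h1 : j < n + 2^n := by have := two_pow_pos' n; omega
  rw [spec_input x h1, addrVal, binVal_testBit _ _ (by omega)]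
  congr 1
  apply Fin.ext
  simp [Fin.castAdd]
  omega

theorem spec_notbit {n : ℕ} (x : Fin (n + 2^n) → Bool) {j : ℕ} (hj : j < n) :
    specAt n x (n + 2^n + j) = !(addrVal n x).testBit (n - 1 - j) := by
  have h1 : ¬ (n + 2^n + j < n + 2^n) := by omega
  have h2 : n + 2^n + j < n + 2^n + n := by omega
  rw [specAt, dif_neg h1, dif_pos h2]
  have : n + 2^n + j - (n + 2^n) = j := by omega
  simp only [this]
  congr 1
  rw [addrVal, binVal_testBit _ _ (by omega)]
  congr 1
  apply Fin.ext
  simp [Fin.castAdd]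
  omega

/-- `specAt` at an indicator node `w ∈ [2, 2^(n+1))`. -/
theorem specInd {n : ℕ} (hn : 0 < n) (x : Fin (n + 2^n) → Bool) {w : ℕ}
    (hw2 : 2 ≤ w) (hwU : w < 2^(n+1)) :
    specAt n x (indIdx n w)
      = decide ((2^n + addrVal n x) / 2 ^ (n - Nat.log2 w) = w) := by
  have hP : 0 < 2^n := two_pow_pos' n
  have hP2 : (2:ℕ)^(n+1) = 2^n + 2^n := by ring
  have hA : addrVal n x < 2^n := binVal_lt _
  have hpow : 2^(n-1) * 2 = 2^n := by
    rw [← pow_succ]; congr 1; omega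
  have hdiv : (2^n + addrVal n x) / 2^(n-1) = 2 + addrVal n x / 2^(n-1) := by
    have hZ : 2^n + addrVal n x = addrVal n x + 2 * 2^(n-1) := by omega
    rw [hZ, Nat.add_mul_div_right _ _ (two_pow_pos' (n-1))]
    omega
  have hQ : 0 < 2^(n-1) := Nat.two_pow_pos _
  have hsm : addrVal n x / 2^(n-1) < 2 :=
    Nat.div_lt_of_lt_mul (by omega)
  have hq01 : addrVal n x / 2^(n-1) = 0 ∨ addrVal n x / 2^(n-1) = 1 := by
    set q := addrVal n x / 2^(n-1) with hq
    clear_value q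
    omega
  have htb : (addrVal n x).testBit (n-1) = decide (addrVal n x / 2^(n-1) = 1) := by
    rw [Nat.testBit_eq_decide_div_mod_eq, decide_eq_decide]
    rcases hq01 with h01 | h01 <;> rw [h01] <;> simp
  rcases Nat.lt_or_ge w 4 with hw4 | hw4
  · interval_cases w
    · -- w = 2 : the ¬x₁ gate
      have : indIdx n 2 = n + 2^n + 0 := by rw [indIdx]; simp
      rw [this, spec_notbit x hn]
      have hl : Nat.log2 2 = 1 := log2_eq (by norm_num) (by norm_num)
      rw [hl]
      have hidx : n - 1 - 0 = n - 1 := by omega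
      rw [hidx, htb, hdiv]
      rcases hq01 with h01 | h01 <;> simp [h01]
    · -- w = 3 : the x₁ input
      have : indIdx n 3 = 0 := by rw [indIdx]; simp
      rw [this, spec_bit x hn]
      have hl : Nat.log2 3 = 1 := log2_eq (by norm_num) (by norm_num)
      rw [hl]
      have hidx : n - 1 - 0 = n - 1 := by omega
      rw [hidx, htb, hdiv]
      rcases hq01 with h01 | h01 <;> simp [h01]
  · -- w ≥ 4 : a real indicator and-gate
    have hidx : indIdx n w = n + 2^n + n + (w - 4) := by
      rw [indIdx]; rw [if_neg (by omega), if_neg (by omega)]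
    rw [hidx, specAt, dif_neg (by omega), dif_neg (by omega),
      if_pos (by simp only [termBase]; omega)]
    have : n + 2^n + n + (w - 4) - (n + 2^n + n) + 4 = w := by omega
    rw [this]

theorem decide_div2_split (q u : ℕ) :
    decide (q = u) = (decide (q / 2 = u / 2) &&
      (if u % 2 = 1 then decide (q % 2 = 1) else !decide (q % 2 = 1))) := by
  by_cases h : q = u
  · subst h
    rcases Nat.mod_two_eq_zero_or_one q with h2 | h2 <;> simp [h2]
  · by_cases h2 : q/2 = u/2
    · rcases Nat.mod_two_eq_zero_or_one q with hq | hq <;>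
        rcases Nat.mod_two_eq_zero_or_one u with hu | hu <;>
        simp [h, h2, hq, hu] <;> omega
    · simp [h, h2]

/-- `specAt` at a leaf child of an or-node, heap label `c ∈ [2, 2^(n+1))`. -/
theorem specLeaf {n : ℕ} (hn : 0 < n) (x : Fin (n + 2^n) → Bool) {c : ℕ}
    (hc2 : 2 ≤ c) (hcU : c < 2^(n+1)) :
    specAt n x (leafIdx n c)
      = (yVal n x && decide ((2^n + addrVal n x) / 2 ^ (n - Nat.log2 c) = c)) := by
  have hP := Nat.two_pow_pos n
  have hP2 : (2:ℕ)^(n+1) = 2^n + 2^n := by ring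
  have hA : addrVal n x < 2^n := binVal_lt _
  rw [leafIdx]
  split
  · rename_i hcS
    rw [specAt, dif_neg (by simp only [orBase, termBase]; omega),
        dif_neg (by simp only [orBase, termBase]; omega),
        if_neg (by simp only [orBase, termBase]; omega),
        dif_neg (by simp only [orBase, termBase]; omega)]
    have hveq : 2^n - 1 - (orBase n + (2^n - 1 - c) - orBase n) = c := by omega
    rw [hveq]
  · rename_i hcS
    push_neg at hcS
    have hl : Nat.log2 c = n := log2_eq hcS (by omega)
    rw [hl, Nat.sub_self, pow_zero, Nat.div_one]
    rw [specAt, dif_neg (by simp only [termBase]; omega),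
        dif_neg (by simp only [termBase]; omega),
        if_neg (by simp only [termBase]; omega),
        dif_pos (by simp only [orBase, termBase]; omega)]
    have ha : termBase n + (c - 2^n) - termBase n = c - 2^n := by omega
    simp only [ha]
    by_cases hZ : 2^n + addrVal n x = c
    · have h1 : 2^n + addrVal n x = 2^n + (c - 2^n) := by omega
      rw [decide_eq_true h1, decide_eq_true hZ]
      simp only [Bool.true_and, Bool.and_true]
      rw [yVal]
      congr 1
      apply Fin.ext
      simp only [Fin.natAdd]
      have hm' : addrVal n x % 2^n = addrVal n x := Nat.mod_eq_of_lt hA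
      rw [hm']
      omega
    · have h1 : ¬(2^n + addrVal n x = 2^n + (c - 2^n)) := by omega
      rw [decide_eq_false h1, decide_eq_false hZ]
      simp

theorem eval_spec (n : ℕ) (hn : 0 < n) (x : Fin (n + 2^n) → Bool) :
    ∀ i, ∀ h : i < (addrC n hn).size, (addrC n hn).evalGate x i h = specAt n x i := by
  intro i
  induction i using Nat.strong_induction_on with
  | _ i IH =>
  intro h
  have hP := Nat.two_pow_pos n
  have hP2 : (2:ℕ)^(n+1) = 2^n + 2^n := by ring
  have hP3 : 2 ≤ 2^n := by
    calc 2 = 2^1 := by norm_num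
    _ ≤ 2^n := Nat.pow_le_pow_right (by norm_num) hn
  have hA : addrVal n x < 2^n := binVal_lt _
  have hg : (addrC n hn).gates ⟨i, h⟩ = gateAt n i := rfl
  have hi : i < csize n := h
  by_cases h1 : i < n + 2^n
  · rw [gateAt, dif_pos h1] at hg
    rw [Circuit.evalGate_input _ x hg, spec_input x h1]
  by_cases h2 : i < n + 2^n + n
  · rw [gateAt, dif_neg h1, if_pos h2] at hg
    have hlt : i - (n + 2^n) < i := by omega
    rw [Circuit.evalGate_not _ x hg hlt, IH _ hlt (hlt.trans h),
      spec_input x (show i - (n + 2^n) < n + 2^n by omega)]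
    rw [specAt, dif_neg h1, dif_pos h2]
  by_cases h3 : i < termBase n
  · -- indicator and-gate
    rw [gateAt, dif_neg h1, if_neg h2, if_pos h3] at hg
    set u := i - (n + 2^n + n) + 4 with hu
    have hu4 : 4 ≤ u := by omega
    have huU : u < 2^(n+1) := by simp only [termBase] at h3; omega
    set m := Nat.log2 (u/2) with hm
    have hm1 : 1 ≤ m := le_log2_of_le (show 2^1 ≤ u/2 by omega)
    have hlog : Nat.log2 u = m + 1 := log2_step (by omega)
    have hmn : m + 1 ≤ n := by
      have := log2_le_of_lt (show u < 2^(n+1) from huU) (by omega)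
      omega
    -- child bounds
    have hc1lt : indIdx n (u/2) < i := by
      rw [indIdx]
      split
      · omega
      split
      · omega
      · have : u / 2 ≥ 4 := by rename_i hx2 hx3; omega
        simp only [termBase] at h3
        omega
    have hc2lt : (if u % 2 = 1 then m else n + 2^n + m) < i := by
      split <;> omega
    rw [Circuit.evalGate_and _ x hg hc1lt hc2lt, IH _ hc1lt (hc1lt.trans h),
      IH _ hc2lt (hc2lt.trans h)]
    rw [specInd hn x (show 2 ≤ u/2 by omega) (show u/2 < 2^(n+1) by omega)]
    conv_rhs => rw [specAt, dif_neg h1, dif_neg h2, if_pos h3]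
    rw [← hu, hlog, ← hm]
    -- key arithmetic
    have hqq : (2^n + addrVal n x) / 2^(n-m-1) / 2 = (2^n + addrVal n x) / 2^(n-m) := by
      rw [Nat.div_div_eq_div_mul, ← pow_succ]
      congr 2
      omega
    have htbZ : (2^n + addrVal n x).testBit (n-m-1) = (addrVal n x).testBit (n-m-1) :=
      Nat.testBit_two_pow_add_gt (by omega) _
    have htb2 : (addrVal n x).testBit (n-1-m)
        = decide ((2^n + addrVal n x) / 2^(n-m-1) % 2 = 1) := by
      have hee : n-1-m = n-m-1 := by omega
      rw [hee, ← htbZ, Nat.testBit_eq_decide_div_mod_eq]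
    have hnm : n - (m+1) = n - m - 1 := by omega
    rw [hnm, decide_div2_split ((2^n + addrVal n x) / 2^(n-m-1)) u, hqq]
    by_cases hpar : u % 2 = 1
    · rw [if_pos hpar, if_pos hpar, spec_bit x (show m < n by omega), htb2]
    · rw [if_neg hpar, if_neg hpar, spec_notbit x (show m < n by omega), htb2]
  by_cases h4 : i < orBase n
  · -- term and-gate
    rw [gateAt, dif_neg h1, if_neg h2, if_neg h3, if_pos h4] at hg
    set a := i - termBase n with ha
    have haB : a < 2^n := by simp only [orBase] at h4; omega
    have hc1lt : indIdx n (2^n + a) < i := by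
      rw [indIdx]
      simp only [termBase, orBase] at *
      split
      · omega
      split
      · omega
      · omega
    have hc2lt : n + a < i := by
      simp only [termBase, orBase] at *
      omega
    rw [Circuit.evalGate_and _ x hg hc1lt hc2lt, IH _ hc1lt (hc1lt.trans h),
      IH _ hc2lt (hc2lt.trans h)]
    rw [specInd hn x (show 2 ≤ 2^n + a by omega) (show 2^n + a < 2^(n+1) by omega)]
    have hl : Nat.log2 (2^n + a) = n := log2_eq (by omega) (by omega)
    rw [hl, Nat.sub_self, pow_zero, Nat.div_one]
    rw [spec_input x (show n + a < n + 2^n by omega)]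
    rw [specAt, dif_neg h1, dif_neg h2, if_neg h3, dif_pos h4]
  · -- or-gate
    rw [gateAt, dif_neg h1, if_neg h2, if_neg h3, if_neg h4] at hg
    set v := 2^n - 1 - (i - orBase n) with hv
    have hiS : i < csize n := hi
    have hv1 : 1 ≤ v := by simp only [csize] at hiS; omega
    have hvU : v < 2^n := by omega
    have key : ∀ c, v < c → c < 2^(n+1) → leafIdx n c < i := by
      intro c hcc1 hcc2
      rw [leafIdx]
      split
      · simp only [csize] at hiS
        simp only [orBase] at *
        omega
      · simp only [orBase] at *
        omega
    have hl1 : leafIdx n (2*v) < i := key _ (by omega) (by omega)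
    have hl2 : leafIdx n (2*v+1) < i := key _ (by omega) (by omega)
    rw [Circuit.evalGate_or _ x hg hl1 hl2, IH _ hl1 (hl1.trans h), IH _ hl2 (hl2.trans h)]
    rw [specLeaf hn x (show 2 ≤ 2*v by omega) (show 2*v < 2^(n+1) by omega),
      specLeaf hn x (show 2 ≤ 2*v+1 by omega) (show 2*v+1 < 2^(n+1) by omega)]
    rw [specAt, dif_neg h1, dif_neg h2, if_neg h3, dif_neg h4, ← hv]
    set mv := Nat.log2 v with hmv
    have hmvn : mv < n := (Nat.log2_lt (by omega)).2 hvU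
    have hd1 : (2*v)/2 = v := by omega
    have hd2 : (2*v+1)/2 = v := by omega
    have hl2v : Nat.log2 (2*v) = mv + 1 := by rw [log2_step (by omega), hd1]
    have hl2v1 : Nat.log2 (2*v+1) = mv + 1 := by rw [log2_step (by omega), hd2]
    rw [hl2v, hl2v1]
    cases hy : yVal n x
    · simp
    · simp only [Bool.true_and]
      have hnm : n - (mv+1) = n - mv - 1 := by omega
      rw [hnm]
      have hqq : (2^n + addrVal n x) / 2^(n-mv-1) / 2 = (2^n + addrVal n x) / 2^(n-mv) := by
        rw [Nat.div_div_eq_div_mul, ← pow_succ]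
        congr 2
        omega
      rw [← Bool.decide_or, ← hqq, decide_eq_decide]
      set q := (2^n + addrVal n x) / 2^(n-mv-1) with hqdef
      clear_value q
      omega

theorem addrC_computes (n : ℕ) (hn : 0 < n) : (addrC n hn).Computes (ADDR n) := by
  intro x
  rw [Circuit.output, eval_spec n hn x _ _]
  have hP := Nat.two_pow_pos n
  have hP3 : 2 ≤ 2^n := by
    calc 2 = 2^1 := by norm_num
    _ ≤ 2^n := Nat.pow_le_pow_right (by norm_num) hn
  have hA : addrVal n x < 2^n := binVal_lt _
  have hout : ((addrC n hn).out : ℕ) = csize n - 1 := rfl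
  rw [hout]
  rw [specAt, dif_neg (by simp only [csize, orBase, termBase]; omega),
    dif_neg (by simp only [csize, orBase, termBase]; omega),
    if_neg (by simp only [csize, orBase, termBase]; omega),
    dif_neg (by simp only [csize, orBase, termBase]; omega)]
  have hveq : 2^n - 1 - (csize n - 1 - orBase n) = 1 := by
    simp only [csize, orBase, termBase]
    omega
  rw [hveq]
  have hlog1 : Nat.log2 1 = 0 := by rw [Nat.log2_def]; simp
  rw [hlog1, Nat.sub_zero]
  have hdiv : (2^n + addrVal n x) / 2^n = 1 :=
    Nat.div_eq_of_lt_le (by omega) (by omega)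
  rw [hdiv]
  have hdt : (decide (1 = 1)) = true := by simp
  rw [hdt, Bool.and_true]
  rfl

theorem energy_le (n : ℕ) (hn : 0 < n) : (addrC n hn).energy ≤ 3 * n := by
  rw [Circuit.energy]
  apply Finset.sup_le
  intro x _
  rw [Circuit.energyAt]
  have hP := Nat.two_pow_pos n
  have hP2 : (2:ℕ)^(n+1) = 2^n + 2^n := by ring
  have hP3 : 2 ≤ 2^n := by
    calc 2 = 2^1 := by norm_num
    _ ≤ 2^n := Nat.pow_le_pow_right (by norm_num) hn
  have hA : addrVal n x < 2^n := binVal_lt _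
  classical
  set T : Finset ℕ :=
    ((((Finset.range n).image (fun j => n + 2^n + j)) ∪
      ((Finset.Icc 2 n).image
        (fun d => n + 2^n + n + ((2^n + addrVal n x) / 2^(n-d)) - 4))) ∪
      {termBase n + addrVal n x}) ∪
    ((Finset.Icc 1 n).image
      (fun t => orBase n + (2^n - 1 - (2^n + addrVal n x) / 2^t))) with hT
  have hsub : (Finset.univ.filter fun i : Fin (addrC n hn).size =>
      ((addrC n hn).gates i).isInner = true
        ∧ (addrC n hn).evalGate x i i.isLt = true).image Fin.val ⊆ T := by
    intro k hk
    simp only [Finset.mem_image] at hk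
    obtain ⟨⟨i, hi⟩, hmem, rfl⟩ := hk
    simp only [Finset.mem_filter, Finset.mem_univ, true_and] at hmem
    obtain ⟨hinner, heval⟩ := hmem
    rw [eval_spec n hn x i hi] at heval
    have hgg : (addrC n hn).gates ⟨i, hi⟩ = gateAt n i := rfl
    rw [hgg] at hinner
    have hi' : i < csize n := hi
    by_cases h1 : i < n + 2^n
    · rw [gateAt, dif_pos h1] at hinner
      simp [Gate.isInner] at hinner
    by_cases h2 : i < n + 2^n + n
    · apply Finset.mem_union_left
      apply Finset.mem_union_left
      apply Finset.mem_union_left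
      simp only [Finset.mem_image, Finset.mem_range]
      exact ⟨i - (n + 2^n), by omega, by omega⟩
    by_cases h3 : i < termBase n
    · rw [specAt, dif_neg h1, dif_neg h2, if_pos h3, decide_eq_true_eq] at heval
      have hu4 : 4 ≤ i - (n+2^n+n) + 4 := by omega
      have huU : i - (n+2^n+n) + 4 < 2^(n+1) := by simp only [termBase] at h3; omega
      have hd2 : 2 ≤ Nat.log2 (i - (n+2^n+n) + 4) := le_log2_of_le (show 2^2 ≤ _ by omega)
      have hdn : Nat.log2 (i - (n+2^n+n) + 4) ≤ n := log2_le_of_lt huU (by omega)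
      apply Finset.mem_union_left
      apply Finset.mem_union_left
      apply Finset.mem_union_right
      simp only [Finset.mem_image, Finset.mem_Icc]
      refine ⟨Nat.log2 (i - (n+2^n+n) + 4), ⟨hd2, hdn⟩, ?_⟩
      rw [heval]
      omega
    by_cases h4 : i < orBase n
    · rw [specAt, dif_neg h1, dif_neg h2, if_neg h3, dif_pos h4,
        Bool.and_eq_true, decide_eq_true_eq] at heval
      apply Finset.mem_union_left
      apply Finset.mem_union_right
      simp only [Finset.mem_singleton]
      have := heval.1
      omega
    · rw [specAt, dif_neg h1, dif_neg h2, if_neg h3, dif_neg h4,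
        Bool.and_eq_true, decide_eq_true_eq] at heval
      have hv1 : 1 ≤ 2^n - 1 - (i - orBase n) := by simp only [csize] at hi'; omega
      have hvU : 2^n - 1 - (i - orBase n) < 2^n := by omega
      have hlv : Nat.log2 (2^n - 1 - (i - orBase n)) < n :=
        (Nat.log2_lt (by omega)).2 hvU
      apply Finset.mem_union_right
      simp only [Finset.mem_image, Finset.mem_Icc]
      refine ⟨n - Nat.log2 (2^n - 1 - (i - orBase n)), ⟨by omega, by omega⟩, ?_⟩
      rw [heval.2]
      omega
  have hcard : T.card ≤ 3 * n := by
    have c1 : ((Finset.range n).image (fun j => n + 2^n + j)).card ≤ n := by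
      apply le_trans (Finset.card_image_le)
      simp
    have c2 : ((Finset.Icc 2 n).image
        (fun d => n + 2^n + n + ((2^n + addrVal n x) / 2^(n-d)) - 4)).card ≤ n - 1 := by
      apply le_trans (Finset.card_image_le)
      rw [Nat.card_Icc]
      omega
    have c4 : ((Finset.Icc 1 n).image
        (fun t => orBase n + (2^n - 1 - (2^n + addrVal n x) / 2^t))).card ≤ n := by
      apply le_trans (Finset.card_image_le)
      rw [Nat.card_Icc]
      omega
    rw [hT]
    have := Finset.card_union_le
      (((Finset.range n).image (fun j => n + 2^n + j)) ∪
      ((Finset.Icc 2 n).image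
        (fun d => n + 2^n + n + ((2^n + addrVal n x) / 2^(n-d)) - 4)))
      ({termBase n + addrVal n x} :
        Finset ℕ)
    have h12 := Finset.card_union_le
      ((Finset.range n).image (fun j => n + 2^n + j))
      ((Finset.Icc 2 n).image
        (fun d => n + 2^n + n + ((2^n + addrVal n x) / 2^(n-d)) - 4))
    have htop := Finset.card_union_le
      ((((Finset.range n).image (fun j => n + 2^n + j)) ∪
      ((Finset.Icc 2 n).image
        (fun d => n + 2^n + n + ((2^n + addrVal n x) / 2^(n-d)) - 4))) ∪
      ({termBase n + addrVal n x} : Finset ℕ))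
      ((Finset.Icc 1 n).image
        (fun t => orBase n + (2^n - 1 - (2^n + addrVal n x) / 2^t)))
    have hsing : ({termBase n + addrVal n x} : Finset ℕ).card = 1 := Finset.card_singleton _
    omega
  calc (Finset.univ.filter fun i : Fin (addrC n hn).size =>
      ((addrC n hn).gates i).isInner = true
        ∧ (addrC n hn).evalGate x i i.isLt = true).card
      = ((Finset.univ.filter fun i : Fin (addrC n hn).size =>
      ((addrC n hn).gates i).isInner = true
        ∧ (addrC n hn).evalGate x i i.isLt = true).image Fin.val).card :=
        (Finset.card_image_of_injective _ Fin.val_injective).symm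
    _ ≤ T.card := Finset.card_le_card hsub
    _ ≤ 3 * n := hcard


/-- For every positive integer `n`, `EC(ADDR_n) ≤ 3n`. -/
theorem stmt9 (n : ℕ) (hn : 0 < n) : EC (ADDR n) ≤ 3 * n := by
  have h1 : EC (ADDR n) ≤ (addrC n hn).energy :=
    Nat.sInf_le ⟨addrC n hn, addrC_computes n hn, rfl⟩
  exact h1.trans (energy_le n hn)
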